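/- arXiv:2405.15057 — 3 statements merged into one kernel-verified Lean document; each statement's English description precedes it below -/
import Mathlib

section
/- Let q = p^m with p prime, let B = {α₁,…,α_m} be a basis of F_{p^m} over F_p with dual basis {β₁,…,β_m} (so tr(αᵢβⱼ) = δ_{ij}). Define Ψ_B : F_{p^m}^{2n} → F_p^{2mn} by expanding the first half of each vector in the basis B and the second half in the dual basis. Then for all c, d ∈ F_{p^m}^{2n}, the trace-symplectic inner product ⟨c, d⟩_T equals the symplectic inner product ⟨Ψ_B(c), Ψ_B(d)⟩_S over F_p. -/
open Finset

/-- Expanding `x` in `B` and `y` in its trace-dual basis `D`, bilinearity of `(x, y) ↦ tr(x y)`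
collapses the double sum `∑ᵢ ∑ⱼ xᵢ yⱼ tr(Bᵢ Dⱼ)` to its diagonal. -/
theorem Algebra.trace_mul_eq_sum_repr_mul_repr {K L ι : Type*} [CommRing K] [CommRing L]
    [Algebra K L] [Fintype ι] [DecidableEq ι] (B D : Module.Basis ι K L)
    (hdual : ∀ i j, Algebra.trace K L (B i * D j) = if i = j then 1 else 0) (x y : L) :
    Algebra.trace K L (x * y) = ∑ j, B.repr x j * D.repr y j := by
  conv_lhs => rw [← B.sum_repr x, ← D.sum_repr y]
  simp only [sum_mul_sum, map_sum, smul_mul_smul_comm, map_smul, hdual, smul_eq_mul, mul_ite,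
    mul_one, mul_zero, sum_ite_eq, mem_univ, if_true]

theorem stmt6_general (p : ℕ) (F : Type) [Field F]
    [Algebra (ZMod p) F] (m : ℕ) (B D : Module.Basis (Fin m) (ZMod p) F)
    (hdual : ∀ i j, Algebra.trace (ZMod p) F (B i * D j) = if i = j then 1 else 0)
    (n : ℕ) (a b u v : Fin n → F) :
    (∑ i, Algebra.trace (ZMod p) F (a i * v i - b i * u i)) =
      (∑ i, ∑ j, B.repr (a i) j * D.repr (v i) j) -
        ∑ i, ∑ j, D.repr (b i) j * B.repr (u i) j := by
  rw [← sum_sub_distrib]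
  refine sum_congr rfl fun i _ => ?_
  rw [map_sub, Algebra.trace_mul_eq_sum_repr_mul_repr B D hdual, mul_comm (b i),
    Algebra.trace_mul_eq_sum_repr_mul_repr B D hdual]
  simp only [mul_comm (B.repr (u i) _)]

/-- Expanding the first half of each vector in a basis `B` of `F_{p^m}/F_p` and the
second half in the dual basis `D` (with `tr(Bᵢ·Dⱼ) = δᵢⱼ`), the trace-symplectic inner
product over `F_{p^m}` equals the symplectic inner product of the expansions over `F_p`. -/
theorem stmt6 (p : ℕ) [Fact p.Prime] (F : Type) [Field F] [Fintype F]
    [Algebra (ZMod p) F] (m : ℕ) (B D : Module.Basis (Fin m) (ZMod p) F)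
    (hdual : ∀ i j, Algebra.trace (ZMod p) F (B i * D j) = if i = j then 1 else 0)
    (n : ℕ) (a b u v : Fin n → F) :
    (∑ i, Algebra.trace (ZMod p) F (a i * v i - b i * u i)) =
      (∑ i, ∑ j, B.repr (a i) j * D.repr (v i) j) -
        ∑ i, ∑ j, D.repr (b i) j * B.repr (u i) j :=
  stmt6_general p F m B D hdual n a b u v
end

section
/- Let λ ∈ F_q \ {0, 1, −1}, m ≥ 1, and let C ⊆ F_q^{2mℓ} be an F_q-linear code that is invariant under the map applying the λ-constashift by ℓ positions to the left half and the λ^{−1}-constashift by ℓ positions to the right half simultaneously. Then C = C₁ × C₂, where C₁ = {c₁ : (c₁|c₂) ∈ C for some c₂} and C₂ = {c₂ : (c₁|c₂) ∈ C for some c₁}; i.e., (c₁|c₂) ∈ C implies (c₁|0) ∈ C and (0|c₂) ∈ C. -/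
/-!
Iterating the shift `m` times multiplies every row by `λ` exactly once (each row passes the
wrap-around position once), so `C` is stable under `(c₁, c₂) ↦ (λ c₁, λ⁻¹ c₂)`. As `λ ≠ λ⁻¹`,
the combination `λ (c₁, c₂) - (λ c₁, λ⁻¹ c₂) = (0, (λ - λ⁻¹) c₂)` separates the two halves.
-/

open Finset

/-- The `λ`-constashift by `ℓ` positions on `F^{mℓ}` (vectors viewed as `m × ℓ`
arrays, i.e. functions `ZMod m → (Fin ℓ → F)` shifting rows cyclically and
multiplying the wrapped-around row by `λ`). -/
def constashift {F : Type} [Field F] {m ℓ : ℕ} (lam : F)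
    (v : ZMod m → Fin ℓ → F) : ZMod m → Fin ℓ → F :=
  fun i => (if i = 0 then lam else 1) • v (i - 1)

theorem Submodule.mk_zero_mem_and_zero_mk_mem_of_smul_mem {K M N : Type*} [DivisionRing K]
    [AddCommGroup M] [Module K M] [AddCommGroup N] [Module K N] (C : Submodule K (M × N))
    {a b : K} (hab : a ≠ b) (hC : ∀ c ∈ C, (a • c.1, b • c.2) ∈ C) {c : M × N} (hc : c ∈ C) :
    (c.1, 0) ∈ C ∧ (0, c.2) ∈ C := by
  have hsnd : (0, c.2) ∈ C := by
    have hdiff : a • c - (a • c.1, b • c.2) = (0, (a - b) • c.2) := by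
      ext <;> simp [sub_smul]
    have hmem := C.smul_mem (a - b)⁻¹ (C.sub_mem (C.smul_mem a hc) (hC c hc))
    rwa [hdiff, Prod.smul_mk, smul_zero, inv_smul_smul₀ (sub_ne_zero.mpr hab)] at hmem
  refine ⟨?_, hsnd⟩
  convert C.sub_mem hc hsnd using 1
  ext <;> simp

theorem ZMod.card_filter_range_natCast_eq (m : ℕ) [NeZero m] (i : ZMod m) :
    #((range m).filter fun j : ℕ => (j : ZMod m) = i) = 1 := by
  rw [card_eq_one]
  refine ⟨i.val, ?_⟩
  ext j
  simp only [mem_filter, mem_range, mem_singleton]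
  constructor
  · rintro ⟨hj, rfl⟩
    exact (ZMod.val_cast_of_lt hj).symm
  · rintro rfl
    exact ⟨ZMod.val_lt i, ZMod.natCast_zmod_val i⟩

theorem constashift_iterate_apply {F : Type} [Field F] {m ℓ : ℕ} (lam : F)
    (v : ZMod m → Fin ℓ → F) (k : ℕ) (i : ZMod m) :
    (constashift lam)^[k] v i =
      lam ^ #((range k).filter fun j : ℕ => (j : ZMod m) = i) • v (i - k) := by
  induction k generalizing v with
  | zero => simp
  | succ k ih =>
    have hcount : #((range (k + 1)).filter fun j : ℕ => (j : ZMod m) = i) =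
        #((range k).filter fun j : ℕ => (j : ZMod m) = i) +
          if (k : ZMod m) = i then 1 else 0 := by
      simp only [card_filter, sum_range_succ]
    rw [Function.iterate_succ_apply, ih, hcount, pow_add]
    simp only [constashift, sub_eq_zero, eq_comm (a := i), Nat.cast_succ, sub_add_eq_sub_sub]
    split_ifs <;> simp [mul_smul]

theorem constashift_iterate_self {F : Type} [Field F] {m ℓ : ℕ} [NeZero m] (lam : F)
    (v : ZMod m → Fin ℓ → F) :
    (constashift lam)^[m] v = lam • v := by
  funext i
  simp [constashift_iterate_apply, ZMod.card_filter_range_natCast_eq]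

/-- If `C ⊆ F_q^{2mℓ}` is linear and invariant under the simultaneous
`λ`-constashift on the left half and `λ⁻¹`-constashift on the right half,
with `λ ∉ {0,1,-1}`, then `C = C₁ × C₂`:
`(c₁|c₂) ∈ C` implies `(c₁|0) ∈ C` and `(0|c₂) ∈ C`. -/
theorem stmt15 (F : Type) [Field F] (m ℓ : ℕ) [NeZero m]
    (lam : F) (h0 : lam ≠ 0) (h1 : lam ≠ 1) (h2 : lam ≠ -1)
    (C : Submodule F ((ZMod m → Fin ℓ → F) × (ZMod m → Fin ℓ → F)))
    (hinv : ∀ c ∈ C, (constashift lam c.1, constashift lam⁻¹ c.2) ∈ C) :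
    ∀ c ∈ C, ((c.1, 0) : _ × _) ∈ C ∧ ((0, c.2) : _ × _) ∈ C := by
  intro c hc
  have hshift : Set.MapsTo (Prod.map (constashift lam) (constashift lam⁻¹)) (C : Set _) C :=
    fun c hc => hinv c hc
  have hne : lam ≠ lam⁻¹ := fun h => by
    rcases inv_eq_self₀.mp h.symm with h | h | h <;> contradiction
  refine C.mk_zero_mem_and_zero_mk_mem_of_smul_mem hne (fun d hd => ?_) hc
  simpa only [Prod.map_iterate, Prod.map, SetLike.mem_coe, constashift_iterate_self] using
    hshift.iterate m hd
end

section
/- Let C ⊆ F_{q^2}^n be an F_{q^2}-linear code with Hermitian hull H = C ∩ C^{⊥H} of dimension s = k − e, where k = dim C. Suppose B ∈ F_{q^2}^{e×n} is a matrix whose rows form a Hermitian orthonormal basis of a complement of H in C (so BB* = I_e and BM* = 0 for M a generator matrix of H), and β ∈ F_{q^2} satisfies β^{q+1} = −1. Then the code C' ⊆ F_{q^2}^{n+e} generated by the rows of the block matrix [[M, 0],[B, βI_e]] is Hermitian self-orthogonal of dimension k. -/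
/-!
The Hermitian product `⟨x, y⟩ = ∑ xᵤ yᵤ^q` is sesquilinear because `y ↦ y^q` is a ring
endomorphism of `F_{q²}`, so self-orthogonality of a span reduces to the pairwise orthogonality
of its generators. The extra coordinates contribute nothing to products involving rows of
`M`, and contribute `β^{q+1} δᵢⱼ = -δᵢⱼ` to the product of rows `i`, `j` of `[B βI]`,
cancelling `BB* = I`. Projecting the new rows back onto the first `n` coordinates recovers
the linearly independent rows of `M` and `B`, which gives the dimension.
-/

open Finset

/-- `q` is a power of the characteristic because `q ^ 2` is, so `x ↦ x ^ q` is an iterated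
Frobenius. -/
theorem FiniteField.exists_ringHom_pow_eq_of_card_eq_sq {K : Type*} [Field K] [Fintype K]
    {q : ℕ} (hcard : Fintype.card K = q ^ 2) : ∃ σ : K →+* K, ∀ a, σ a = a ^ q := by
  obtain ⟨p, _, n, hp, hpn⟩ := FiniteField.card' K
  have : ExpChar K p := ExpChar.prime hp
  obtain ⟨k, -, rfl⟩ :=
    (Nat.dvd_prime_pow hp).mp (hpn ▸ hcard ▸ Dvd.intro_left _ (sq q).symm)
  exact ⟨iterateFrobenius K p k, fun _ => rfl⟩

theorem LinearMap.apply_eq_zero_of_mem_span {R M N P : Type*} [CommSemiring R]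
    [AddCommMonoid M] [AddCommMonoid N] [AddCommMonoid P] [Module R M] [Module R N] [Module R P]
    {σ : R →+* R} (f : M →ₗ[R] N →ₛₗ[σ] P) {s : Set M} {t : Set N}
    (h : ∀ a ∈ s, ∀ b ∈ t, f a b = 0) {x : M} {y : N} (hx : x ∈ Submodule.span R s)
    (hy : y ∈ Submodule.span R t) : f x y = 0 := by
  induction hx, hy using Submodule.span_induction₂ with
  | mem_mem a b ha hb => exact h a ha b hb
  | zero_left => simp
  | zero_right => simp
  | add_left _ _ _ _ _ _ h₁ h₂ => simp [h₁, h₂]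
  | add_right _ _ _ _ _ _ h₁ h₂ => simp [h₁, h₂]
  | smul_left _ _ _ _ _ h => simp [h]
  | smul_right _ _ _ _ _ h => simp [h]

section HermitianForm

variable {K : Type*} [CommRing K] (σ : K →+* K)

def hermitianForm (ι : Type*) [Fintype ι] : (ι → K) →ₗ[K] (ι → K) →ₛₗ[σ] K :=
  LinearMap.mk₂'ₛₗ (RingHom.id K) σ (fun x y => ∑ u, x u * σ (y u))
    (fun _ _ _ => by simp only [Pi.add_apply, add_mul, sum_add_distrib])
    (fun _ _ _ => by
      simp only [Pi.smul_apply, smul_eq_mul, mul_assoc, ← mul_sum, RingHom.id_apply])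
    (fun _ _ _ => by simp only [Pi.add_apply, map_add, mul_add, sum_add_distrib])
    (fun _ _ _ => by
      simp only [Pi.smul_apply, smul_eq_mul, map_mul, mul_left_comm _ (σ _), ← mul_sum])

variable {σ}

@[simp]
theorem hermitianForm_apply {ι : Type*} [Fintype ι] (x y : ι → K) :
    hermitianForm σ ι x y = ∑ u, x u * σ (y u) := rfl

theorem hermitianForm_sumElim {ι κ : Type*} [Fintype ι] [Fintype κ] (x y : ι → K)
    (x' y' : κ → K) :
    hermitianForm σ (ι ⊕ κ) (Sum.elim x x') (Sum.elim y y') =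
      hermitianForm σ ι x y + hermitianForm σ κ x' y' := by
  simp [Fintype.sum_sum_type]

end HermitianForm

section ExtendedRows

variable {K ι κ ν : Type*} [Field K] [DecidableEq κ]

def extendedRows (M : Matrix ι ν K) (B : Matrix κ ν K) (β : K) :
    ι ⊕ κ → ν ⊕ κ → K :=
  Sum.elim (fun i => Sum.elim (M i) 0)
    (fun j => Sum.elim (B j) (fun u => if u = j then β else 0))

variable {M : Matrix ι ν K} {B : Matrix κ ν K} {β : K}

theorem hermitianForm_extendedRows_eq_zero [Fintype κ] [Fintype ν] {σ : K →+* K}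
    (hβ : β * σ β = -1)
    (hMM : ∀ i j, hermitianForm σ ν (M i) (M j) = 0)
    (hBM : ∀ i j, hermitianForm σ ν (B i) (M j) = 0)
    (hMB : ∀ i j, hermitianForm σ ν (M i) (B j) = 0)
    (hBB : ∀ i j, hermitianForm σ ν (B i) (B j) = if i = j then 1 else 0) (a b : ι ⊕ κ) :
    hermitianForm σ (ν ⊕ κ) (extendedRows M B β a) (extendedRows M B β b) = 0 := by
  rcases a with i | i <;> rcases b with j | j <;>
    simp only [extendedRows, Sum.elim_inl, Sum.elim_inr, hermitianForm_sumElim, map_zero,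
      LinearMap.zero_apply, hMM, hBM, hMB, hBB, add_zero]
  by_cases hij : i = j
  · subst hij
    simp [hβ]
  · simp [hij]

theorem linearIndependent_extendedRows (h : LinearIndependent K (Sum.elim M B)) :
    LinearIndependent K (extendedRows M B β) := by
  refine LinearIndependent.of_comp (LinearMap.funLeft K K Sum.inl) ?_
  convert h
  ext (i | j) u <;> rfl

end ExtendedRows

theorem stmt19_general (q : ℕ)
    (K : Type) [Field K] [Fintype K] (hcard : Fintype.card K = q ^ 2)
    (n s e : ℕ)
    (M : Matrix (Fin s) (Fin n) K) (B : Matrix (Fin e) (Fin n) K)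
    (β : K) (hβ : β ^ (q + 1) = -1)
    (hMM : ∀ i j, (∑ u, M i u * (M j u) ^ q) = 0)
    (hBM : ∀ i j, (∑ u, B i u * (M j u) ^ q) = 0)
    (hMB : ∀ i j, (∑ u, M i u * (B j u) ^ q) = 0)
    (hBB : ∀ i j, (∑ u, B i u * (B j u) ^ q) = (if i = j then 1 else 0 : K))
    (hli : LinearIndependent K (Sum.elim M B))
    (r : Fin s ⊕ Fin e → (Fin n ⊕ Fin e → K))
    (hr : r = Sum.elim (fun i => Sum.elim (M i) 0)
      (fun j => Sum.elim (B j) (fun u => if u = j then β else 0))) :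
    (∀ x ∈ Submodule.span K (Set.range r), ∀ y ∈ Submodule.span K (Set.range r),
        (∑ u, x u * (y u) ^ q) = 0) ∧
      Module.finrank K (Submodule.span K (Set.range r)) = s + e := by
  obtain ⟨σ, hσ⟩ := FiniteField.exists_ringHom_pow_eq_of_card_eq_sq hcard
  have hform : ∀ {ι : Type} [Fintype ι] (x y : ι → K),
      hermitianForm σ ι x y = ∑ u, x u * y u ^ q := by
    simp [hσ]
  have hr' : r = extendedRows M B β := hr
  subst hr'
  refine ⟨fun x hx y hy => ?_, ?_⟩
  · rw [← hform]
    refine (hermitianForm σ _).apply_eq_zero_of_mem_span ?_ hx hy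
    rintro _ ⟨a, rfl⟩ _ ⟨b, rfl⟩
    refine hermitianForm_extendedRows_eq_zero ?_ (by simpa [hform] using hMM)
      (by simpa [hform] using hBM) (by simpa [hform] using hMB) (by simpa [hform] using hBB) a b
    rw [hσ, ← pow_succ', hβ]
  · rw [finrank_span_eq_card (linearIndependent_extendedRows hli)]
    simp

/-- Extending a nearly Hermitian self-orthogonal code: if `M` generates the
Hermitian hull, the rows of `B` are a Hermitian orthonormal basis of a complement
of the hull in the code (`BB* = I`, `BM* = 0`, `MM* = 0`, `MB* = 0`), and
`β^{q+1} = −1`, then the code generated by the rows of `[[M 0],[B βI]]` in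
`F_{q^2}^{n+e}` is Hermitian self-orthogonal of dimension `s + e`. -/
theorem stmt19 (p t q : ℕ) (hp : p.Prime) (hq : q = p ^ t)
    (K : Type) [Field K] [Fintype K] (hcard : Fintype.card K = q ^ 2)
    (n s e : ℕ)
    (M : Matrix (Fin s) (Fin n) K) (B : Matrix (Fin e) (Fin n) K)
    (β : K) (hβ : β ^ (q + 1) = -1)
    (hMM : ∀ i j, (∑ u, M i u * (M j u) ^ q) = 0)
    (hBM : ∀ i j, (∑ u, B i u * (M j u) ^ q) = 0)
    (hMB : ∀ i j, (∑ u, M i u * (B j u) ^ q) = 0)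
    (hBB : ∀ i j, (∑ u, B i u * (B j u) ^ q) = (if i = j then 1 else 0 : K))
    (hli : LinearIndependent K (Sum.elim M B))
    (r : Fin s ⊕ Fin e → (Fin n ⊕ Fin e → K))
    (hr : r = Sum.elim (fun i => Sum.elim (M i) 0)
      (fun j => Sum.elim (B j) (fun u => if u = j then β else 0))) :
    (∀ x ∈ Submodule.span K (Set.range r), ∀ y ∈ Submodule.span K (Set.range r),
        (∑ u, x u * (y u) ^ q) = 0) ∧
      Module.finrank K (Submodule.span K (Set.range r)) = s + e :=
  stmt19_general q K hcard n s e M B β hβ hMM hBM hMB hBB hli r hr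
end
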